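/- Fix a finite field F_q, a positive integer m, and a polynomial P in m variables with rational coefficients. For a monic polynomial f over F_q and j \geq 1, let m_j(f) denote the number of monic irreducible factors of f of degree j counted with multiplicity. Then the sequence of expected values E_d = q^{-d} \sum_{f monic, deg f = d} P(m_1(f), m_2(f), ..., m_m(f)) converges (as a sequence of rational numbers, in the real numbers) as d tends to infinity. -/

import Mathlib

open Polynomial

/-- `m_j(f)`: the number of irreducible factors of `f` of degree `j`, counted with
multiplicity. -/
noncomputable def factorCount {F : Type*} [Field F] (j : ℕ) (f : F[X]) : ℕ :=
  Multiset.count j ((UniqueFactorizationMonoid.factors f).map natDegree)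

/-!
Expanding `P` into monomials reduces the claim to the expected value of a product
`∏ s, m_{δ s}(f)` over a finite index set. Since `m_j(f)` counts the pairs `(p, k)` with `p`
monic irreducible of degree `j`, `k ≥ 1` and `p ^ k ∣ f`, that product counts the tuples
`τ = (p_s, k_s)_s` with `L_τ = lcm_s p_s ^ k_s ∣ f`; a monic `L` divides exactly `q ^ (d - deg L)`
monic polynomials of degree `d`. Hence `E_d = ∑_{τ, deg L_τ ≤ d} q ^ (-deg L_τ)`, which is
nondecreasing in `d`. Every `k_s` is at most `deg L_τ`, so for `r ^ (#ι + 1) = q⁻¹` each term is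
at most `∏_s r ^ k_s`, and `E_d` is bounded by a product of geometric series.
-/

theorem pow_mul_card_le_prod_pow {ι : Type*} [Fintype ι] {r : ℝ} (hr0 : 0 ≤ r) (hr1 : r ≤ 1)
    {k : ι → ℕ} {n : ℕ} (hk : ∀ s, k s ≤ n) : r ^ (Fintype.card ι * n) ≤ ∏ s, r ^ k s := by
  rw [Finset.prod_pow_eq_pow_sum]
  refine pow_le_pow_of_le_one hr0 hr1 ?_
  simpa using Finset.sum_le_card_nsmul Finset.univ k n fun s _ => hk s

theorem exists_pow_eq_of_nonneg_of_lt_one {x : ℝ} (hx0 : 0 ≤ x) (hx1 : x < 1) {n : ℕ}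
    (hn : n ≠ 0) :
    ∃ r : ℝ, 0 ≤ r ∧ r < 1 ∧ r ^ n = x :=
  ⟨x ^ (n⁻¹ : ℝ), Real.rpow_nonneg hx0 _, Real.rpow_lt_one hx0 hx1 (by positivity),
    Real.rpow_inv_natCast_pow hx0 hn⟩

namespace Polynomial

open Finset UniqueFactorizationMonoid
open scoped Classical

variable {F : Type*} [Field F]

theorem factorCount_eq_card_filter_normalizedFactors (j : ℕ) (f : F[X]) :
    factorCount j f = Multiset.card ((normalizedFactors f).filter fun p => j = p.natDegree) := by
  have hdeg : natDegree ∘ normalize = (natDegree : F[X] → ℕ) :=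
    _root_.funext fun _ => natDegree_eq_of_degree_eq degree_normalize
  rw [factorCount, ← Multiset.count_map, normalizedFactors, Multiset.map_map, hdeg]

theorem count_normalizedFactors_eq_card_filter_pow_dvd {p f : F[X]} (hp : Irreducible p)
    (hpm : p.Monic) (hf : f ≠ 0) {d : ℕ} (hd : f.natDegree ≤ d) :
    (normalizedFactors f).count p = #{k ∈ Icc 1 d | p ^ k ∣ f} := by
  have hdvd : ∀ k : ℕ, p ^ k ∣ f ↔ k ≤ (normalizedFactors f).count p := fun k => by
    rw [pow_dvd_iff_le_emultiplicity, emultiplicity_eq_count_normalizedFactors hp hf,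
      hpm.normalize_eq_self, Nat.cast_le]
  have hcount : (normalizedFactors f).count p ≤ d := by
    have h := natDegree_le_of_dvd ((hdvd _).mpr le_rfl) hf
    rw [natDegree_pow] at h
    nlinarith [hp.natDegree_pos]
  have hIcc : {k ∈ Icc 1 d | p ^ k ∣ f} = Icc 1 ((normalizedFactors f).count p) := by
    ext k
    simp only [mem_filter, mem_Icc, hdvd]
    omega
  rw [hIcc, Nat.card_Icc, Nat.add_sub_cancel]

section Lcm

variable {ι : Type*} [Fintype ι]

noncomputable def lcmOfPowers (τ : ι → F[X] × ℕ) : F[X] :=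
  univ.lcm fun s => (τ s).1 ^ (τ s).2

theorem lcmOfPowers_monic_and_le_natDegree {τ : ι → F[X] × ℕ} (hτ : ∀ s, Irreducible (τ s).1) :
    (lcmOfPowers τ).Monic ∧ ∀ s, (τ s).2 ≤ (lcmOfPowers τ).natDegree := by
  have hne : lcmOfPowers τ ≠ 0 := by
    rw [Ne, lcmOfPowers, Finset.lcm_eq_zero_iff]
    rintro ⟨s, -, hs⟩
    exact pow_ne_zero _ (hτ s).ne_zero hs
  refine ⟨?_, fun s => ?_⟩
  · simpa only [lcmOfPowers, Finset.normalize_lcm] using monic_normalize hne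
  · have h : (τ s).1 ^ (τ s).2 ∣ lcmOfPowers τ := Finset.dvd_lcm (mem_univ s)
    replace h := natDegree_le_of_dvd h hne
    rw [natDegree_pow] at h
    nlinarith [(hτ s).natDegree_pos]

end Lcm

section FiniteField

variable (F) [Fintype F]

noncomputable def monicOfDegreeEmbedding (d : ℕ) : (Fin d → F) ↪ F[X] where
  toFun c := X ^ d + ((degreeLTEquiv F d).symm c : F[X])
  inj' := (add_right_injective _).comp
    (Subtype.val_injective.comp (degreeLTEquiv F d).symm.injective)

noncomputable def monicsOfDegree (d : ℕ) : Finset F[X] :=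
  univ.map (monicOfDegreeEmbedding F d)

noncomputable def monicIrreducibles (d : ℕ) : Finset F[X] :=
  {p ∈ monicsOfDegree F d | Irreducible p}

variable {F}

theorem mem_monicsOfDegree {d : ℕ} {f : F[X]} :
    f ∈ monicsOfDegree F d ↔ f.Monic ∧ f.natDegree = d := by
  simp only [monicsOfDegree, mem_map, mem_univ, true_and, monicOfDegreeEmbedding,
    Function.Embedding.coeFn_mk]
  constructor
  · rintro ⟨c, rfl⟩
    have hlt : degree ((degreeLTEquiv F d).symm c : F[X]) < d :=
      mem_degreeLT.mp ((degreeLTEquiv F d).symm c).2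
    refine ⟨monic_X_pow_add hlt, ?_⟩
    rw [natDegree_add_eq_left_of_degree_lt (by rwa [degree_X_pow]), natDegree_X_pow]
  · rintro ⟨hmonic, rfl⟩
    have hlt : f - X ^ f.natDegree ∈ degreeLT F f.natDegree := by
      have h := degree_sub_lt_right (p := f) (q := X ^ f.natDegree)
        (by rw [degree_X_pow, degree_eq_natDegree hmonic.ne_zero]) (pow_ne_zero _ X_ne_zero)
        (by rw [hmonic.leadingCoeff, leadingCoeff_X_pow])
      rwa [mem_degreeLT, ← degree_X_pow (R := F)]
    exact ⟨degreeLTEquiv F _ ⟨_, hlt⟩, by simp⟩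

theorem card_monicsOfDegree (d : ℕ) : #(monicsOfDegree F d) = Fintype.card F ^ d := by
  simp [monicsOfDegree]

theorem mem_monicIrreducibles {d : ℕ} {p : F[X]} :
    p ∈ monicIrreducibles F d ↔ Irreducible p ∧ p.Monic ∧ p.natDegree = d := by
  rw [monicIrreducibles, mem_filter, mem_monicsOfDegree, and_comm]

theorem card_filter_dvd_monicsOfDegree {g : F[X]} (hg : g.Monic) (d : ℕ) :
    #{f ∈ monicsOfDegree F d | g ∣ f} =
      if g.natDegree ≤ d then Fintype.card F ^ (d - g.natDegree) else 0 := by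
  split_ifs with hgd
  · rw [← card_monicsOfDegree (d - g.natDegree)]
    refine (card_nbij (g * ·) (fun h hh => ?_) (fun a _ b _ hab => mul_left_cancel₀ hg.ne_zero hab)
      (fun f hf => ?_)).symm
    · rw [mem_coe, mem_monicsOfDegree] at hh
      rw [mem_coe, mem_filter, mem_monicsOfDegree, hg.natDegree_mul hh.1, hh.2]
      exact ⟨⟨hg.mul hh.1, by omega⟩, dvd_mul_right g h⟩
    · rw [mem_coe, mem_filter, mem_monicsOfDegree] at hf
      obtain ⟨⟨hfm, hfd⟩, h, rfl⟩ := hf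
      have hh : h.Monic := hg.of_mul_monic_left hfm
      rw [hg.natDegree_mul hh] at hfd
      exact ⟨h, mem_monicsOfDegree.mpr ⟨hh, by omega⟩, rfl⟩
  · rw [card_eq_zero, filter_eq_empty_iff]
    intro f hf hgf
    rw [mem_monicsOfDegree] at hf
    exact hgd (hf.2 ▸ natDegree_le_of_dvd hgf hf.1.ne_zero)

theorem factorCount_eq_sum_card_filter_pow_dvd (j : ℕ) {f : F[X]} (hf : f ≠ 0) {d : ℕ}
    (hd : f.natDegree ≤ d) :
    factorCount j f = ∑ p ∈ monicIrreducibles F j, #{k ∈ Icc 1 d | p ^ k ∣ f} := by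
  rw [factorCount_eq_card_filter_normalizedFactors, ← Multiset.sum_count_eq_card (s := monicIrreducibles F j)]
  · refine sum_congr rfl fun p hp => ?_
    obtain ⟨hirr, hmonic, hdeg⟩ := mem_monicIrreducibles.mp hp
    rw [Multiset.count_filter_of_pos (p := fun q : F[X] => j = q.natDegree) hdeg.symm,
      count_normalizedFactors_eq_card_filter_pow_dvd hirr hmonic hf hd]
  · intro p hp
    obtain ⟨hpf, rfl⟩ := Multiset.mem_filter.mp hp
    obtain ⟨hirr, hmonic, -⟩ := (Polynomial.mem_normalizedFactors_iff hf).mp hpf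
    exact mem_monicIrreducibles.mpr ⟨hirr, hmonic, rfl⟩

theorem factorCount_eq_card_filter_pow_dvd (j : ℕ) {f : F[X]} (hf : f ≠ 0) {d : ℕ}
    (hd : f.natDegree ≤ d) :
    factorCount j f = #{x ∈ monicIrreducibles F j ×ˢ Icc 1 d | x.1 ^ x.2 ∣ f} := by
  simp only [factorCount_eq_sum_card_filter_pow_dvd j hf hd, card_filter, sum_product]

variable {ι : Type*} [Fintype ι]

variable (F) in
/-- Exponents are capped at `d`, which loses nothing when dividing polynomials of degree `≤ d`. -/
noncomputable def primePowerTuples (δ : ι → ℕ) (d : ℕ) : Finset (ι → F[X] × ℕ) :=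
  Fintype.piFinset fun s => monicIrreducibles F (δ s) ×ˢ Icc 1 d

theorem irreducible_of_mem_primePowerTuples {δ : ι → ℕ} {d : ℕ} {τ : ι → F[X] × ℕ}
    (hτ : τ ∈ primePowerTuples F δ d) (s : ι) : Irreducible (τ s).1 :=
  (mem_monicIrreducibles.mp (mem_product.mp (Fintype.mem_piFinset.mp hτ s)).1).1

theorem prod_factorCount_eq_card_filter_lcmOfPowers_dvd (δ : ι → ℕ) {f : F[X]} (hf : f ≠ 0)
    {d : ℕ} (hd : f.natDegree ≤ d) :
    ∏ s, factorCount (δ s) f = #{τ ∈ primePowerTuples F δ d | lcmOfPowers τ ∣ f} := by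
  have hfilter : {τ ∈ primePowerTuples F δ d | lcmOfPowers τ ∣ f} =
      Fintype.piFinset fun s => {x ∈ monicIrreducibles F (δ s) ×ˢ Icc 1 d | x.1 ^ x.2 ∣ f} := by
    ext τ
    simp [primePowerTuples, lcmOfPowers, Finset.lcm_dvd_iff, Fintype.mem_piFinset, forall_and]
  simp only [hfilter, Fintype.card_piFinset, factorCount_eq_card_filter_pow_dvd _ hf hd]

theorem sum_prod_factorCount (δ : ι → ℕ) (d : ℕ) :
    ∑ f ∈ monicsOfDegree F d, ∏ s, factorCount (δ s) f =
      ∑ τ ∈ primePowerTuples F δ d, if (lcmOfPowers τ).natDegree ≤ d then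
        Fintype.card F ^ (d - (lcmOfPowers τ).natDegree) else 0 := by
  calc ∑ f ∈ monicsOfDegree F d, ∏ s, factorCount (δ s) f
      = ∑ f ∈ monicsOfDegree F d, #{τ ∈ primePowerTuples F δ d | lcmOfPowers τ ∣ f} := by
        refine sum_congr rfl fun f hf => ?_
        obtain ⟨hfm, hfd⟩ := mem_monicsOfDegree.mp hf
        exact prod_factorCount_eq_card_filter_lcmOfPowers_dvd δ hfm.ne_zero hfd.le
    _ = ∑ τ ∈ primePowerTuples F δ d, #{f ∈ monicsOfDegree F d | lcmOfPowers τ ∣ f} := by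
        simp only [card_filter]
        exact sum_comm
    _ = _ := sum_congr rfl fun τ hτ => card_filter_dvd_monicsOfDegree
        (lcmOfPowers_monic_and_le_natDegree (irreducible_of_mem_primePowerTuples hτ)).1 d

variable (F) in
noncomputable def expectedProdFactorCount (δ : ι → ℕ) (d : ℕ) : ℝ :=
  (∑ f ∈ monicsOfDegree F d, ∏ s, (factorCount (δ s) f : ℝ)) / (Fintype.card F : ℝ) ^ d

theorem expectedProdFactorCount_eq_sum (δ : ι → ℕ) (d : ℕ) :
    expectedProdFactorCount F δ d = ∑ τ ∈ primePowerTuples F δ d with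
      (lcmOfPowers τ).natDegree ≤ d, ((Fintype.card F : ℝ) ^ (lcmOfPowers τ).natDegree)⁻¹ := by
  have hq : (Fintype.card F : ℝ) ≠ 0 := Nat.cast_ne_zero.mpr Fintype.card_ne_zero
  simp_rw [expectedProdFactorCount, ← Nat.cast_prod, ← Nat.cast_sum]
  rw [sum_prod_factorCount, Nat.cast_sum, sum_div, sum_filter]
  refine sum_congr rfl fun τ _ => ?_
  split_ifs with h
  · rw [Nat.cast_pow, pow_sub₀ _ hq h, mul_div_right_comm, div_self (pow_ne_zero _ hq), one_mul]
  · rw [Nat.cast_zero, zero_div]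

theorem monotone_expectedProdFactorCount (δ : ι → ℕ) :
    Monotone (expectedProdFactorCount F δ) := by
  intro d d' hdd'
  simp only [expectedProdFactorCount_eq_sum]
  refine sum_le_sum_of_subset_of_nonneg (fun τ hτ => ?_) fun _ _ _ => by positivity
  simp only [primePowerTuples, mem_filter, Fintype.mem_piFinset, mem_product, mem_Icc] at hτ ⊢
  exact ⟨fun s => ⟨(hτ.1 s).1, (hτ.1 s).2.1, (hτ.1 s).2.2.trans hdd'⟩, hτ.2.trans hdd'⟩

theorem bddAbove_expectedProdFactorCount (δ : ι → ℕ) :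
    BddAbove (Set.range (expectedProdFactorCount F δ)) := by
  have hq : (1 : ℝ) < Fintype.card F := by exact_mod_cast Fintype.one_lt_card
  obtain ⟨r, hr0, hr1, hr⟩ := exists_pow_eq_of_nonneg_of_lt_one (x := (Fintype.card F : ℝ)⁻¹)
    (by positivity) (inv_lt_one_of_one_lt₀ hq) (Nat.succ_ne_zero (Fintype.card ι))
  refine ⟨∏ s, #(monicIrreducibles F (δ s)) * (1 - r)⁻¹, ?_⟩
  rintro _ ⟨d, rfl⟩
  have hgeom : ∑ k ∈ Icc 1 d, r ^ k ≤ (1 - r)⁻¹ :=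
    sum_le_hasSum _ (fun k _ => pow_nonneg hr0 k) (hasSum_geometric_of_lt_one hr0 hr1)
  calc expectedProdFactorCount F δ d
      ≤ ∑ τ ∈ primePowerTuples F δ d, ((Fintype.card F : ℝ) ^ (lcmOfPowers τ).natDegree)⁻¹ := by
        rw [expectedProdFactorCount_eq_sum]
        exact sum_le_sum_of_subset_of_nonneg (filter_subset _ _) fun _ _ _ => by positivity
    _ ≤ ∑ τ ∈ primePowerTuples F δ d, ∏ s, r ^ (τ s).2 := by
        refine sum_le_sum fun τ hτ => ?_
        rw [← inv_pow, ← hr, ← pow_mul]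
        refine (pow_le_pow_of_le_one hr0 hr1.le (Nat.mul_le_mul_right _ (Nat.le_succ _))).trans
          (pow_mul_card_le_prod_pow hr0 hr1.le fun s => ?_)
        exact (lcmOfPowers_monic_and_le_natDegree
          (irreducible_of_mem_primePowerTuples hτ)).2 s
    _ = ∏ s, ∑ x ∈ monicIrreducibles F (δ s) ×ˢ Icc 1 d, r ^ x.2 :=
        (prod_univ_sum (fun s => monicIrreducibles F (δ s) ×ˢ Icc 1 d)
          fun _ x => r ^ x.2).symm
    _ ≤ ∏ s, #(monicIrreducibles F (δ s)) * (1 - r)⁻¹ := by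
        refine prod_le_prod (fun s _ => by positivity) fun s _ => ?_
        rw [sum_product, sum_const (∑ k ∈ Icc 1 d, r ^ k), nsmul_eq_mul]
        exact mul_le_mul_of_nonneg_left hgeom (by positivity)

theorem exists_tendsto_expectedProdFactorCount (δ : ι → ℕ) :
    ∃ L : ℝ, Filter.Tendsto (expectedProdFactorCount F δ) Filter.atTop (nhds L) :=
  ⟨_, tendsto_atTop_ciSup (monotone_expectedProdFactorCount δ)
    (bddAbove_expectedProdFactorCount δ)⟩

variable (F) in
theorem expected_eval_factorCount_eq_sum {m : ℕ} (P : MvPolynomial (Fin m) ℚ) (d : ℕ) :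
    ((∑ᶠ f ∈ {f : F[X] | f.Monic ∧ f.natDegree = d},
        MvPolynomial.eval (fun i : Fin m => (factorCount ((i : ℕ) + 1) f : ℚ)) P : ℚ) : ℝ) /
        (Fintype.card F : ℝ) ^ d =
      ∑ v ∈ P.support, ((P.coeff v : ℚ) : ℝ) *
        expectedProdFactorCount F (fun s : (Σ i, Fin (v i)) => (s.1 : ℕ) + 1) d := by
  have hset : {f : F[X] | f.Monic ∧ f.natDegree = d} = ↑(monicsOfDegree F d) :=
    Set.ext fun _ => mem_monicsOfDegree.symm
  rw [hset, finsum_mem_coe_finset]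
  simp only [MvPolynomial.eval_eq', expectedProdFactorCount, Fintype.prod_sigma, prod_const,
    card_univ, Fintype.card_fin]
  push_cast
  rw [sum_comm, sum_div]
  simp only [mul_sum, sum_div, mul_div_assoc]

end FiniteField

end Polynomial

theorem statement14_general (F : Type*) [Field F] [Fintype F] (m : ℕ)
    (P : MvPolynomial (Fin m) ℚ) :
    ∃ L : ℝ, Filter.Tendsto
      (fun d : ℕ =>
        ((∑ᶠ f ∈ {f : F[X] | f.Monic ∧ f.natDegree = d},
            MvPolynomial.eval (fun i : Fin m => (factorCount ((i : ℕ) + 1) f : ℚ)) P : ℚ) : ℝ) /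
          (Fintype.card F : ℝ) ^ d)
      Filter.atTop (nhds L) := by
  choose L hL using fun v : Fin m →₀ ℕ =>
    exists_tendsto_expectedProdFactorCount (F := F) fun s : (Σ i, Fin (v i)) => (s.1 : ℕ) + 1
  refine ⟨∑ v ∈ P.support, ((P.coeff v : ℚ) : ℝ) * L v, ?_⟩
  simp only [expected_eval_factorCount_eq_sum]
  exact tendsto_finsetSum _ fun v _ => (hL v).const_mul _

/-- For a fixed finite field `F_q` and a character polynomial
`P ∈ ℚ[x₁, …, x_m]`, the expected values
`E_d = q^{-d} ∑_{f monic, deg f = d} P(m₁(f), …, m_m(f))` converge as `d → ∞`. -/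
theorem statement14 (F : Type*) [Field F] [Fintype F] (m : ℕ) (hm : 0 < m)
    (P : MvPolynomial (Fin m) ℚ) :
    ∃ L : ℝ, Filter.Tendsto
      (fun d : ℕ =>
        ((∑ᶠ f ∈ {f : F[X] | f.Monic ∧ f.natDegree = d},
            MvPolynomial.eval (fun i : Fin m => (factorCount ((i : ℕ) + 1) f : ℚ)) P : ℚ) : ℝ) /
          (Fintype.card F : ℝ) ^ d)
      Filter.atTop (nhds L) :=
  statement14_general F m P
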